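/- Let l ∈ {K, D, T, K4, KD4, S4}. Every finite pointed model (M,s) for l+5 is bisimilar to a flat finite pointed model for l+5; that is, there exists a flat finite pointed model (M',s') for l+5 with (M,s) ∼ (M',s'). -/

import Mathlib

/-! In a euclidean frame, any two states reachable from `s` in two steps are related to each
other, and every successor of `s` is reachable in two steps. So `s` together with this cluster is
closed under `R`; the submodel it spans is bisimilar to `M` through the inclusion, keeps every frame
condition, and is flat with `R1` the edges leaving `s` and `R2` the total relation on the cluster. -/

/-- Modal formulas in negation normal form, as in the paper:
φ ::= ⊥ | ⊤ | p | ¬p | φ∧φ | φ∨φ | □φ | ◇φ. -/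
inductive Form : Type where
  | bot : Form
  | top : Form
  | pos : ℕ → Form
  | npos : ℕ → Form
  | and : Form → Form → Form
  | or : Form → Form → Form
  | box : Form → Form
  | dia : Form → Form
deriving DecidableEq

namespace Form

/-- Negation, defined as usual (by De Morgan dualities). -/
def neg : Form → Form
  | bot => top
  | top => bot
  | pos p => npos p
  | npos p => pos p
  | and φ ψ => or φ.neg ψ.neg
  | or φ ψ => and φ.neg ψ.neg
  | box φ => dia φ.neg
  | dia φ => box φ.neg

/-- Implication φ → ψ, defined as usual. -/
def imp (φ ψ : Form) : Form := or φ.neg ψ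

/-- Bi-implication φ ↔ ψ, defined as usual. -/
def biimp (φ ψ : Form) : Form := and (imp φ ψ) (imp ψ φ)

/-- P(φ): the set of propositional variables occurring in φ. -/
def vars : Form → Finset ℕ
  | bot => ∅
  | top => ∅
  | pos p => {p}
  | npos p => {p}
  | and φ ψ => φ.vars ∪ ψ.vars
  | or φ ψ => φ.vars ∪ ψ.vars
  | box φ => φ.vars
  | dia φ => φ.vars

/-- Modal depth. -/
def md : Form → ℕ
  | bot => 0
  | top => 0
  | pos _ => 0
  | npos _ => 0
  | and φ ψ => max φ.md ψ.md
  | or φ ψ => max φ.md ψ.md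
  | box φ => φ.md + 1
  | dia φ => φ.md + 1

/-- sub(φ): the set of subformulas of φ. -/
def subf : Form → Finset Form
  | bot => {bot}
  | top => {top}
  | pos p => {pos p}
  | npos p => {npos p}
  | and φ ψ => insert (and φ ψ) (φ.subf ∪ ψ.subf)
  | or φ ψ => insert (or φ ψ) (φ.subf ∪ ψ.subf)
  | box φ => insert (box φ) φ.subf
  | dia φ => insert (dia φ) φ.subf

/-- s̄ub(φ) = sub(φ) ∪ {¬ψ : ψ ∈ sub(φ)}. -/
def subBar (φ : Form) : Finset Form := φ.subf ∪ φ.subf.image neg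

/-- □^k φ : k nested boxes. -/
def boxIter : ℕ → Form → Form
  | 0, φ => φ
  | n + 1, φ => box (boxIter n φ)

def isDia : Form → Bool
  | dia _ => true
  | _ => false

def isBox : Form → Bool
  | box _ => true
  | _ => false

end Form

/-- Big conjunction over a finite set of formulas (⋀∅ = ⊤). -/
noncomputable def bigAnd (s : Finset Form) : Form := s.toList.foldr Form.and Form.top

/-- Big disjunction over a finite set of formulas (⋁∅ = ⊥). -/
noncomputable def bigOr (s : Finset Form) : Form := s.toList.foldr Form.or Form.bot

/-- th(a) = ⋀ a. -/
noncomputable def th (a : Finset Form) : Form := bigAnd a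

/-- A finite Kripke model: a nonempty finite set of states, an accessibility
relation and a valuation. -/
structure Model : Type 1 where
  W : Type
  nonempty : Nonempty W
  finite : Finite W
  R : W → W → Prop
  V : W → Set ℕ

/-- Satisfaction M,w ⊨ φ. -/
def Model.sat (M : Model) : M.W → Form → Prop
  | _, .bot => False
  | _, .top => True
  | w, .pos p => p ∈ M.V w
  | w, .npos p => p ∉ M.V w
  | w, .and φ ψ => M.sat w φ ∧ M.sat w ψ
  | w, .or φ ψ => M.sat w φ ∨ M.sat w ψ
  | w, .box φ => ∀ v, M.R w v → M.sat v φ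
  | w, .dia φ => ∃ v, M.R w v ∧ M.sat v φ

/-- The six base logics K, D, T, K4, KD4, S4. -/
inductive BaseLogic : Type where
  | K | D | T | K4 | KD4 | S4
deriving DecidableEq

/-- A logic: a base logic, possibly extended by axiom 5. -/
structure Logic : Type where
  base : BaseLogic
  has5 : Bool
deriving DecidableEq

def Logic.K : Logic := ⟨.K, false⟩
def Logic.D : Logic := ⟨.D, false⟩
def Logic.T : Logic := ⟨.T, false⟩
def Logic.K4 : Logic := ⟨.K4, false⟩
def Logic.KD4 : Logic := ⟨.KD4, false⟩
def Logic.S4 : Logic := ⟨.S4, false⟩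

/-- l + 5. -/
def BaseLogic.plus5 (b : BaseLogic) : Logic := ⟨b, true⟩

/-- M is a model for the logic l (frame conditions). -/
def Model.IsFor (M : Model) (l : Logic) : Prop :=
  (match l.base with
    | .K => True
    | .D => ∀ w, ∃ v, M.R w v
    | .T => ∀ w, M.R w w
    | .K4 => ∀ a b c, M.R a b → M.R b c → M.R a c
    | .KD4 => (∀ w, ∃ v, M.R w v) ∧ (∀ a b c, M.R a b → M.R b c → M.R a c)
    | .S4 => (∀ w, M.R w w) ∧ (∀ a b c, M.R a b → M.R b c → M.R a c))
  ∧ (l.has5 = true → ∀ a b c, M.R a b → M.R a c → M.R b c)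

/-- φ is satisfiable for l: satisfied at some state of some finite model for l. -/
def Satisfiable (l : Logic) (φ : Form) : Prop :=
  ∃ M : Model, M.IsFor l ∧ ∃ w : M.W, M.sat w φ

/-- φ is valid for l: satisfied at every state of every finite model for l. -/
def Valid (l : Logic) (φ : Form) : Prop :=
  ∀ M : Model, M.IsFor l → ∀ w : M.W, M.sat w φ

/-- φ is complete for l: for every ψ ∈ L(P(φ)), φ→ψ or φ→¬ψ is valid for l. -/
def Complete (l : Logic) (φ : Form) : Prop :=
  ∀ ψ : Form, ψ.vars ⊆ φ.vars → (Valid l (φ.imp ψ) ∨ Valid l (φ.imp ψ.neg))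

/-- Z is a bisimulation modulo P from M to M'. -/
def IsBisim (P : Set ℕ) (M M' : Model) (Z : M.W → M'.W → Prop) : Prop :=
  (∃ s s', Z s s') ∧
  ∀ s s', Z s s' →
    (M.V s ∩ P = M'.V s' ∩ P) ∧
    (∀ t, M.R s t → ∃ t', M'.R s' t' ∧ Z t t') ∧
    (∀ t', M'.R s' t' → ∃ t, M.R s t ∧ Z t t')

/-- (M,a) ∼_P (M',a'). -/
def Bisimilar (P : Set ℕ) (M : Model) (a : M.W) (M' : Model) (a' : M'.W) : Prop :=
  ∃ Z, IsBisim P M M' Z ∧ Z a a'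

/-- (M,a) ≡_P (M',a'): the two pointed models satisfy the same formulas of L(P). -/
def EquivP (P : Set ℕ) (M : Model) (a : M.W) (M' : Model) (a' : M'.W) : Prop :=
  ∀ φ : Form, ↑φ.vars ⊆ P → (M.sat a φ ↔ M'.sat a' φ)

/-- (M,s) is flat (for base logic l, with axiom 5): the carrier is {s}∪W and
R = R1 ∪ R2 with R1 ⊆ {s}×W, R2 an equivalence relation on W, and s ∈ W if
l ∈ {T,S4}. -/
def Flat (l : BaseLogic) (M : Model) (s : M.W) : Prop :=
  ∃ W : Set M.W, (∀ w, w = s ∨ w ∈ W) ∧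
    ∃ R1 R2 : M.W → M.W → Prop,
      (∀ x y, M.R x y ↔ (R1 x y ∨ R2 x y)) ∧
      (∀ x y, R1 x y → x = s ∧ y ∈ W) ∧
      (∀ x y, R2 x y → x ∈ W ∧ y ∈ W) ∧
      (∀ x ∈ W, R2 x x) ∧
      (∀ x y, R2 x y → R2 y x) ∧
      (∀ x y z, R2 x y → R2 y z → R2 x z) ∧
      ((l = .T ∨ l = .S4) → s ∈ W)

/-- A maximal state for l with respect to φ: a maximally l-consistent subset
of s̄ub(φ). -/
def MaxState (l : Logic) (φ : Form) (a : Finset Form) : Prop :=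
  a ⊆ φ.subBar ∧ Satisfiable l (th a) ∧ ∀ ψ ∈ φ.subf, ψ ∈ a ∨ ψ.neg ∈ a

/-- D(x) = {◇ψ : ◇ψ ∈ x}. -/
def DSet (x : Finset Form) : Finset Form := x.filter (fun ψ => ψ.isDia = true)

/-- B(x) = {□ψ : □ψ ∈ x}. -/
def BSet (x : Finset Form) : Finset Form := x.filter (fun ψ => ψ.isBox = true)

/-- A view: a parent-state and a finite set of children-states. -/
structure View : Type where
  parent : Finset Form
  children : Finset (Finset Form)

/-- The view is with respect to φ: all its states are subsets of s̄ub(φ). -/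
def View.WF (φ : Form) (S : View) : Prop :=
  S.parent ⊆ φ.subBar ∧ ∀ c ∈ S.children, c ⊆ φ.subBar

/-- A set of formulas is l-closed. -/
def LClosed (l : Logic) (P : Finset ℕ) (s : Finset Form) : Prop :=
  (∀ φ1 φ2 : Form, Form.and φ1 φ2 ∈ s → φ1 ∈ s ∧ φ2 ∈ s) ∧
  (∀ φ1 φ2 : Form, Form.or φ1 φ2 ∈ s → φ1 ∈ s ∨ φ2 ∈ s) ∧
  ((l.base = .T ∨ l.base = .S4) → ∀ ψ : Form, Form.box ψ ∈ s → ψ ∈ s) ∧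
  (∀ p ∈ P, Form.pos p ∈ s ∨ Form.npos p ∈ s)

/-- The view S is l-complete. -/
def ViewLComplete (l : Logic) (P : Finset ℕ) (S : View) : Prop :=
  LClosed l P S.parent ∧
  (∀ c ∈ S.children, LClosed l P c) ∧
  (∀ ψ : Form, Form.dia ψ ∈ S.parent → ∃ c ∈ S.children, ψ ∈ c) ∧
  (∀ ψ : Form, Form.box ψ ∈ S.parent → ∀ c ∈ S.children, ψ ∈ c) ∧
  ((l.base = .K4 ∨ l.base = .KD4 ∨ l.base = .S4) →
    ∀ ψ : Form, Form.box ψ ∈ S.parent → ∀ c ∈ S.children, Form.box ψ ∈ c) ∧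
  (l.base = .KD4 → S.children.Nonempty)

/-- The view S is consistent for l: every one of its states is consistent. -/
def ViewConsistent (l : Logic) (S : View) : Prop :=
  Satisfiable l (th S.parent) ∧ ∀ c ∈ S.children, Satisfiable l (th c)

/-- d = max{md(th(c')) : c' ∈ C(S)}. -/
noncomputable def childDepth (S : View) : ℕ := S.children.sup (fun c => (th c).md)

/-- A K-maximal child-state: a maximally K-consistent subset of s̄ub_d(φ). -/
def KMaxChild (φ : Form) (d : ℕ) (c : Finset Form) : Prop :=
  c ⊆ φ.subBar.filter (fun ψ => ψ.md ≤ d) ∧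
  Satisfiable Logic.K (th c) ∧
  ∀ ψ ∈ φ.subf, ψ.md ≤ d → (ψ ∈ c ∨ ψ.neg ∈ c)

/-- S' completes S (for logic l, with respect to φ). -/
def ViewCompletes (l : Logic) (φ : Form) (S' S : View) : Prop :=
  ViewLComplete l φ.vars S' ∧
  S.parent ⊆ S'.parent ∧
  (∀ a ∈ S.children, ∃ a' ∈ S'.children, a ⊆ a') ∧
  (l.base = .K → ∀ a' ∈ S'.children, KMaxChild φ (childDepth S') a') ∧
  (l.base ≠ .K → ∀ a' ∈ S'.children, MaxState l φ a')

/-- The depth-0 normal form ⋀_{p∈S} p ∧ ⋀_{p∈P∖S} ¬p. -/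
noncomputable def nf0 (P S : Finset ℕ) : Form :=
  Form.and (bigAnd (S.image Form.pos)) (bigAnd ((P \ S).image Form.npos))

/-- Fine's normal forms F_P^d. -/
noncomputable def NF (P : Finset ℕ) : ℕ → Set Form
  | 0 => { χ | ∃ S ⊆ P, χ = nf0 P S }
  | d + 1 => { χ | ∃ S : Finset Form, ↑S ⊆ NF P d ∧ ∃ S0 ⊆ P,
      χ = Form.and (nf0 P S0)
            (Form.and (bigAnd (S.image Form.dia)) (Form.box (bigOr S))) }

/-- φ is complete up to its depth for l. -/
def CompleteUpToDepth (l : Logic) (φ : Form) : Prop :=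
  ∀ ψ : Form, ψ.vars ⊆ φ.vars → ψ.md ≤ φ.md →
    (Valid l (φ.imp ψ) ∨ Valid l (φ.imp ψ.neg))

def Model.restrict (M : Model) (X : Set M.W) (x₀ : X) : Model where
  W := X
  nonempty := ⟨x₀⟩
  finite := have := M.finite; Subtype.finite
  R x y := M.R x y
  V x := M.V x

namespace Model

variable {M : Model} {X : Set M.W}

theorem IsFor.restrict {l : Logic} (h : M.IsFor l) (hX : ∀ w ∈ X, ∀ t, M.R w t → t ∈ X)
    (x₀ : X) : (M.restrict X x₀).IsFor l := by
  obtain ⟨base, _⟩ := l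
  have serial (hM : ∀ w, ∃ v, M.R w v) (w : X) : ∃ v : X, M.R w v :=
    let ⟨v, hv⟩ := hM w
    ⟨⟨v, hX _ w.2 _ hv⟩, hv⟩
  refine ⟨?_, fun h5 (a b c : X) => h.2 h5 a b c⟩
  cases base with
  | K => trivial
  | D => exact serial h.1
  | T => exact fun w : X => h.1 w
  | K4 => exact fun a b c : X => h.1 a b c
  | KD4 => exact ⟨serial h.1.1, fun a b c : X => h.1.2 a b c⟩
  | S4 => exact ⟨fun w : X => h.1.1 w, fun a b c : X => h.1.2 a b c⟩

theorem IsFor.refl {l : Logic} (h : M.IsFor l) (hl : l.base = .T ∨ l.base = .S4) (w : M.W) :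
    M.R w w := by
  obtain ⟨base, _⟩ := l
  rcases hl with rfl | rfl
  exacts [h.1 w, h.1.1 w]

theorem bisimilar_restrict (P : Set ℕ) (hX : ∀ w ∈ X, ∀ t, M.R w t → t ∈ X) (x₀ x : X) :
    Bisimilar P M x (M.restrict X x₀) x := by
  refine ⟨fun w y => w = y.1, ⟨⟨x, x, rfl⟩, ?_⟩, rfl⟩
  rintro _ y rfl
  exact ⟨rfl, fun t ht => ⟨⟨t, hX _ y.2 _ ht⟩, ht, rfl⟩, fun (t : X) ht => ⟨t, ht, rfl⟩⟩

end Model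

section Euclidean

variable {α : Type*} {r : α → α → Prop} (heuc : ∀ a b c, r a b → r a c → r b c) {s : α}

def cluster (r : α → α → Prop) (s : α) : Set α := {u | ∃ t, r s t ∧ r t u}

include heuc

theorem mem_cluster_of_rel {t : α} (ht : r s t) : t ∈ cluster r s :=
  ⟨t, ht, heuc _ _ _ ht ht⟩

theorem rel_of_mem_cluster {u v : α} (hu : u ∈ cluster r s) (hv : v ∈ cluster r s) : r u v := by
  obtain ⟨t, hst, htu⟩ := hu
  obtain ⟨t', hst', ht'v⟩ := hv
  have ht'u : r t' u := heuc _ _ _ (heuc _ _ _ hst hst') htu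
  exact heuc _ _ _ ht'u ht'v

theorem mem_cluster_of_rel_of_mem {u v : α} (hu : u ∈ cluster r s) (huv : r u v) :
    v ∈ cluster r s := by
  obtain ⟨t, hst, htu⟩ := hu
  exact ⟨t, hst, heuc _ _ _ (heuc _ _ _ htu (heuc _ _ _ hst hst)) huv⟩

end Euclidean

theorem flat_of_euclidean (l : BaseLogic) (N : Model) (s : N.W)
    (heuc : ∀ a b c, N.R a b → N.R a c → N.R b c) (hgen : ∀ w, w = s ∨ w ∈ cluster N.R s)
    (hrefl : (l = .T ∨ l = .S4) → N.R s s) : Flat l N s := by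
  refine ⟨cluster N.R s, hgen, fun x y => x = s ∧ N.R s y,
    fun x y => x ∈ cluster N.R s ∧ y ∈ cluster N.R s, fun x y => ?_,
    fun x y ⟨hx, hy⟩ => ⟨hx, mem_cluster_of_rel heuc hy⟩, fun x y h => h,
    fun x hx => ⟨hx, hx⟩, fun x y ⟨hx, hy⟩ => ⟨hy, hx⟩, fun x y z ⟨hx, _⟩ ⟨_, hz⟩ => ⟨hx, hz⟩,
    fun hl => mem_cluster_of_rel heuc (hrefl hl)⟩
  constructor
  · intro hxy
    rcases hgen x with rfl | hx
    · exact Or.inl ⟨rfl, hxy⟩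
    · exact Or.inr ⟨hx, mem_cluster_of_rel_of_mem heuc hx hxy⟩
  · rintro (⟨rfl, hy⟩ | ⟨hx, hy⟩)
    exacts [hy, rel_of_mem_cluster heuc hx hy]

/-- every pointed model for l+5 is bisimilar to a flat pointed
model for l+5. -/
theorem stmt2 (l : BaseLogic) (M : Model) (s : M.W) (h : M.IsFor l.plus5) :
    ∃ (M' : Model) (s' : M'.W),
      M'.IsFor l.plus5 ∧ Flat l M' s' ∧ Bisimilar Set.univ M s M' s' := by
  have heuc := h.2 rfl
  let X : Set M.W := {w | w = s ∨ w ∈ cluster M.R s}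
  have hX : ∀ w ∈ X, ∀ t, M.R w t → t ∈ X := by
    rintro w (rfl | hw) t hwt
    exacts [Or.inr (mem_cluster_of_rel heuc hwt), Or.inr (mem_cluster_of_rel_of_mem heuc hw hwt)]
  let s' : X := ⟨s, Or.inl rfl⟩
  have hM' : (M.restrict X s').IsFor l.plus5 := h.restrict hX s'
  have hgen : ∀ w : (M.restrict X s').W, w = s' ∨ w ∈ cluster (M.restrict X s').R s' := by
    rintro ⟨w, rfl | ⟨t, hst, htw⟩⟩
    · exact Or.inl rfl
    · exact Or.inr ⟨⟨t, hX s (Or.inl rfl) t hst⟩, hst, htw⟩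
  have hrefl : (l = .T ∨ l = .S4) → (M.restrict X s').R s' s' := fun hl => h.refl hl s
  exact ⟨M.restrict X s', s', hM', flat_of_euclidean l _ s' (hM'.2 rfl) hgen hrefl,
    Model.bisimilar_restrict _ hX s' s'⟩
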